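/- A binary linear [16, 5, 8] code in which every word has weight divisible by 8 has exactly one word of weight 16 and exactly 30 words of weight 8. -/

import Mathlib

/-!
Count the total weight of the code coordinatewise. A coordinate that does not vanish on the whole
binary linear code `C` is nonzero on exactly half of its words (translate by a word that is nonzero
there), so `|C| = 32` divides twice the total weight. The nonzero weights are `8` and `16`, and
weight `16` forces the all-ones word; so with `a` words of weight `8` and `b ≤ 1` of weight `16`
we get `a + b = 31` and `32 ∣ 16 a + 32 b`, whence `a` is even, `b = 1` and `a = 30`.
-/

open Finset

variable {ι : Type*} [Fintype ι]

theorem sum_hammingNorm_eq_sum_card_filter {β : Type*} [DecidableEq β] [Zero β]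
    (s : Finset (ι → β)) :
    ∑ w ∈ s, hammingNorm w = ∑ i, #{w ∈ s | w i ≠ 0} := by
  simp only [hammingNorm, card_filter]
  exact sum_comm

theorem eq_one_of_hammingNorm_eq_card {w : ι → ZMod 2} (h : hammingNorm w = Fintype.card ι) :
    w = 1 := by
  have hne : ∀ i ∈ univ, w i ≠ 0 := card_filter_eq_iff.mp h
  funext i
  exact Fin.eq_one_of_ne_zero _ (hne i (mem_univ i))

theorem card_filter_hammingNorm_eq_card_le_one (s : Finset (ι → ZMod 2)) :
    #{w ∈ s | hammingNorm w = Fintype.card ι} ≤ 1 :=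
  card_le_one.mpr fun _ ha _ hb =>
    (eq_one_of_hammingNorm_eq_card (mem_filter.mp ha).2).trans
      (eq_one_of_hammingNorm_eq_card (mem_filter.mp hb).2).symm

namespace Submodule

theorem card_filter_mem_eq_pow_finrank {K V : Type*} [DivisionRing K] [Fintype K] [AddCommGroup V]
    [Module K V] [Fintype V] (C : Submodule K V) [DecidablePred (· ∈ C)] :
    #{v | v ∈ C} = Fintype.card K ^ Module.finrank K C := by
  rw [← Fintype.card_subtype, Module.card_eq_pow_finrank (K := K) (V := C)]

variable [DecidableEq ι] (C : Submodule (ZMod 2) (ι → ZMod 2)) [DecidablePred (· ∈ C)]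

theorem two_mul_card_filter_apply_ne_zero {i : ι} {v : ι → ZMod 2} (hv : v ∈ C)
    (hvi : v i ≠ 0) : 2 * #{w | w ∈ C ∧ w i ≠ 0} = #{w | w ∈ C} := by
  have hflip : ∀ a : ZMod 2, a + v i ≠ 0 ↔ a = 0 := by
    revert hvi; generalize v i = b; decide +revert
  have translate : #{w | w ∈ C ∧ w i ≠ 0} = #{w | w ∈ C ∧ ¬ w i ≠ 0} := by
    refine card_nbij' (· + v) (· + v) ?_ ?_ ?_ ?_ <;> intro w hw <;>
      simp only [coe_filter, mem_univ, true_and, Set.mem_ofPred_eq] at hw ⊢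
    · exact ⟨C.add_mem hw.1 hv, by simp [hflip, hw.2]⟩
    · exact ⟨C.add_mem hw.1 hv, by simpa [hflip] using hw.2⟩
    all_goals rw [add_assoc, ZModModule.add_self, add_zero]
  rw [two_mul]
  nth_rw 2 [translate]
  rw [← filter_filter, ← filter_filter, card_filter_add_card_filter_not]

theorem card_dvd_two_mul_sum_hammingNorm :
    #{w | w ∈ C} ∣ 2 * ∑ w ∈ {w | w ∈ C}, hammingNorm w := by
  rw [sum_hammingNorm_eq_sum_card_filter, mul_sum]
  refine dvd_sum fun i _ => ?_
  rw [filter_filter]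
  by_cases h : ∃ v ∈ C, v i ≠ 0
  · obtain ⟨v, hv, hvi⟩ := h
    rw [C.two_mul_card_filter_apply_ne_zero hv hvi]
  · rw [filter_false_of_mem fun w _ hw => h ⟨w, hw⟩]
    simp

end Submodule

theorem code_16_5_8_weights_general (C : Submodule (ZMod 2) (Fin 16 → ZMod 2))
    (hk : Module.finrank (ZMod 2) C = 5)
    (h8 : ∀ w ∈ C, 8 ∣ hammingNorm w) :
    {w : Fin 16 → ZMod 2 | w ∈ C ∧ hammingNorm w = 16}.ncard = 1 ∧
      {w : Fin 16 → ZMod 2 | w ∈ C ∧ hammingNorm w = 8}.ncard = 30 := by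
  classical
  set S : Finset (Fin 16 → ZMod 2) := {w | w ∈ C}
  have hS : #S = 2 ^ 5 := by rw [C.card_filter_mem_eq_pow_finrank, hk, ZMod.card]
  have hweights : ∀ w ∈ S, hammingNorm w ∈ ({0, 8, 16} : Finset ℕ) := by
    intro w hw
    have hle : hammingNorm w ≤ 16 := by simpa using hammingNorm_le_card_fintype (x := w)
    obtain ⟨m, hm⟩ := h8 w (mem_filter.mp hw).2
    simp only [mem_insert, mem_singleton]
    omega
  have hzero : #{w ∈ S | hammingNorm w = 0} = 1 := by
    refine card_eq_one.mpr ⟨0, ?_⟩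
    ext w
    simp only [S, mem_filter, mem_univ, true_and, hammingNorm_eq_zero, mem_singleton]
    exact ⟨And.right, fun h => ⟨h ▸ C.zero_mem, h⟩⟩
  have hfull : #{w ∈ S | hammingNorm w = 16} ≤ 1 := by
    simpa using card_filter_hammingNorm_eq_card_le_one S
  have hcard := card_eq_sum_card_fiberwise hweights
  have hsum := sum_fiberwise_of_maps_to' hweights id
  have hdvd : 2 ^ 5 ∣ 2 * ∑ w ∈ S, hammingNorm w := hS ▸ C.card_dvd_two_mul_sum_hammingNorm
  simp only [sum_const, smul_eq_mul, id] at hsum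
  rw [sum_insert (by decide), sum_insert (by decide), sum_singleton] at hcard hsum
  have hncard (n : ℕ) :
      {w | w ∈ C ∧ hammingNorm w = n}.ncard = #{w ∈ S | hammingNorm w = n} := by
    rw [← Set.ncard_coe_finset]
    simp [S]
  rw [hncard, hncard]
  constructor <;> omega

/-- A binary linear [16,5,8] code all of whose weights are divisible by 8 has exactly
one word of weight 16 and exactly 30 words of weight 8. -/
theorem code_16_5_8_weights (C : Submodule (ZMod 2) (Fin 16 → ZMod 2))
    (hk : Module.finrank (ZMod 2) C = 5)
    (hd : ∀ w ∈ C, w ≠ 0 → 8 ≤ hammingNorm w)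
    (h8 : ∀ w ∈ C, 8 ∣ hammingNorm w) :
    {w : Fin 16 → ZMod 2 | w ∈ C ∧ hammingNorm w = 16}.ncard = 1 ∧
      {w : Fin 16 → ZMod 2 | w ∈ C ∧ hammingNorm w = 8}.ncard = 30 :=
  code_16_5_8_weights_general C hk h8
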